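/- (Uniqueness half of the Orlicz decomposition) Let ψ be an Orlicz function and Ω a bounded smooth domain. If f ∈ L^ψ(Ω, Cl_n) is both left monogenic (Df = 0 weakly) and of the form f = D̄g for some g ∈ W_0^{1,ψ}(Ω, Cl_n), then f = 0 almost everywhere; i.e., A^ψ(Ω, Cl_n) ∩ D̄(W_0^{1,ψ}(Ω, Cl_n)) = {0}. -/

import Mathlib

/-!
Write `g = Σ_A g_A e_A`. The Clifford relations `e_i e_j + e_j e_i = -2 δ_ij` and the symmetry of
second derivatives give `D D̄ g = Σ_A (Δ g_A) e_A`, so monogenicity of `D̄ g` makes every component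
`g_A` harmonic on `Ω`. By the weak maximum principle, applied to `g_A` and `-g_A`, a harmonic
function that is continuous on `closure Ω` and vanishes on `frontier Ω` vanishes on `Ω`; hence
`g = 0` near every point of `Ω`, and so does `D̄ g`. The maximum principle itself comes from the
perturbation `g_A + δ ‖x‖²`, whose Laplacian is positive and which therefore has no interior
maximum, since the Laplacian is `≤ 0` at a local maximum.
-/

open MeasureTheory

/-- The quadratic form `Q(x) = -‖x‖²` on `ℝⁿ`, generating the Clifford algebra `Cl_n`. -/
noncomputable def Qneg (n : ℕ) : QuadraticForm ℝ (EuclideanSpace ℝ (Fin n)) :=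
  -(LinearMap.BilinMap.toQuadraticMap (innerₗ (EuclideanSpace ℝ (Fin n))))

/-- The basis product `e_A = e_{j₁} ⋯ e_{j_r}` for `A = {j₁ < ⋯ < j_r} ⊆ {1,…,n}`. -/
noncomputable def eA (n : ℕ) (A : Finset (Fin n)) : CliffordAlgebra (Qneg n) :=
  ((A.sort (· ≤ ·)).map
    (fun j => CliffordAlgebra.ι (Qneg n) (EuclideanSpace.single j 1))).prod

open Laplacian InnerProductSpace Filter Topology

namespace CliffordAlgebra

variable {R M κ : Type*} [CommRing R] [AddCommGroup M] [Module R M] {Q : QuadraticForm R M}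
  [Fintype κ]

theorem two_smul_sum_smul_ι_mul_ι (v : κ → M) (c : κ → κ → R)
    (hc : ∀ i j, c i j = c j i) :
    (2 : R) • ∑ i, ∑ j, c i j • (ι Q (v i) * ι Q (v j)) =
      algebraMap R _ (∑ i, ∑ j, c i j * QuadraticMap.polar Q (v i) (v j)) := by
  have hswap : ∑ i, ∑ j, c i j • (ι Q (v i) * ι Q (v j)) =
      ∑ i, ∑ j, c i j • (ι Q (v j) * ι Q (v i)) := by
    rw [Finset.sum_comm]
    simp only [hc]
  conv_lhs => rw [two_smul]; arg 2; rw [hswap]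
  simp only [← Finset.sum_add_distrib, ← smul_add, ι_mul_ι_add_swap]
  simp only [Algebra.smul_def, map_sum, map_mul]

end CliffordAlgebra

open CliffordAlgebra EuclideanSpace

theorem polar_Qneg {n : ℕ} (x y : EuclideanSpace ℝ (Fin n)) :
    QuadraticMap.polar (Qneg n) x y = -(2 * inner ℝ x y) := by
  rw [Qneg, FunLike.coe_neg, QuadraticMap.polar_neg,
    LinearMap.BilinMap.polar_toQuadraticMap, innerₗ_apply_apply, innerₗ_apply_apply,
    real_inner_comm, two_mul]

theorem sum_smul_ι_single_mul_neg_ι_single_mul {n : ℕ} (c : Fin n → Fin n → ℝ)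
    (hc : ∀ i j, c i j = c j i) (m : CliffordAlgebra (Qneg n)) :
    ∑ j, ∑ i, c j i • (ι (Qneg n) (single j 1) * -ι (Qneg n) (single i 1) * m) =
      (∑ i, c i i) • m := by
  have hS : ∑ j, ∑ i, c j i • (ι (Qneg n) (single j 1) * ι (Qneg n) (single i 1)) =
      algebraMap ℝ _ (-∑ i, c i i) := by
    refine smul_right_injective _ (two_ne_zero' ℝ) ?_
    beta_reduce
    rw [two_smul_sum_smul_ι_mul_ι (fun i => single i 1) c hc, Algebra.smul_def, ← map_mul]
    congr 1
    simp [polar_Qneg, EuclideanSpace.inner_single_left, Finset.mul_sum, mul_comm]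
  calc _ = -((∑ j, ∑ i, c j i • (ι (Qneg n) (single j 1) * ι (Qneg n) (single i 1))) * m) := by
        simp only [Finset.sum_mul, Finset.sum_neg_distrib, smul_mul_assoc, mul_neg, neg_mul,
          smul_neg]
    _ = (∑ i, c i i) • m := by rw [hS, map_neg, neg_mul, neg_neg, ← Algebra.smul_def]

section SecondDerivative

variable {𝕜 E F : Type*} [NontriviallyNormedField 𝕜] [NormedAddCommGroup E] [NormedSpace 𝕜 E]
  [NormedAddCommGroup F] [NormedSpace 𝕜 F]

theorem fderiv_fun_fderiv_apply {f : E → F} {x : E} (hf : DifferentiableAt 𝕜 (fderiv 𝕜 f) x)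
    (v w : E) : fderiv 𝕜 (fun y => fderiv 𝕜 f y v) x w = fderiv 𝕜 (fderiv 𝕜 f) x w v := by
  rw [fderiv_clm_apply hf (differentiableAt_const v)]
  simp

end SecondDerivative

theorem IsLocalMax.fderiv_fderiv_apply_self_nonpos {E : Type*} [NormedAddCommGroup E]
    [NormedSpace ℝ E] {f : E → ℝ} {z : E} (hmax : IsLocalMax f z) (hf : ContDiffAt ℝ 2 f z)
    (v : E) : fderiv ℝ (fderiv ℝ f) z v v ≤ 0 := by
  set φ : ℝ → ℝ := fun t => f (z + t • v)
  have hline : ∀ t : ℝ, HasDerivAt (fun t : ℝ => z + t • v) v t := fun t => by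
    simpa using ((hasDerivAt_id t).smul_const v).const_add z
  have hline_cont : Tendsto (fun t : ℝ => z + t • v) (𝓝 0) (𝓝 z) := by
    simpa using (hline 0).continuousAt.tendsto
  have hderiv : deriv φ =ᶠ[𝓝 0] fun t => fderiv ℝ f (z + t • v) v := by
    filter_upwards [hline_cont.eventually (hf.eventually (by simp))] with t ht
    exact ((ht.differentiableAt (by simp)).hasFDerivAt.comp_hasDerivAt t (hline t)).deriv
  have hderiv2 : deriv (deriv φ) 0 = fderiv ℝ (fderiv ℝ f) z v v := by
    have hdf : DifferentiableAt ℝ (fderiv ℝ f) z :=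
      (hf.fderiv_right (m := 1) le_rfl).differentiableAt one_ne_zero
    rw [hderiv.deriv_eq, ← fderiv_fun_fderiv_apply hdf]
    exact ((hdf.clm_apply (differentiableAt_const v)).hasFDerivAt.comp_hasDerivAt_of_eq 0
      (hline 0) (by simp)).deriv
  have hmaxφ : IsLocalMax φ 0 := by
    simpa [IsLocalMax, IsMaxFilter, φ] using hline_cont.eventually hmax
  by_contra! hpos
  -- By the second-derivative test `0` is also a local minimum of `φ`, so `φ` is locally constant.
  have hminφ : IsLocalMin φ 0 :=
    isLocalMin_of_deriv_deriv_pos (hderiv2 ▸ hpos) hmaxφ.deriv_eq_zero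
      (hf.continuousAt.comp_of_eq (hline 0).continuousAt (by simp))
  have hconst : φ =ᶠ[𝓝 0] fun _ => φ 0 := (hmaxφ.and hminφ).mono fun _ h => le_antisymm h.1 h.2
  have hzero : deriv (deriv φ) 0 = 0 := by
    rw [hconst.deriv.deriv_eq]
    simp
  linarith

section Laplacian

variable {E : Type*} [NormedAddCommGroup E] [InnerProductSpace ℝ E] [FiniteDimensional ℝ E]

theorem laplacian_eq_sum_fderiv_fderiv {κ F : Type*} [Fintype κ] [NormedAddCommGroup F]
    [NormedSpace ℝ F] (v : OrthonormalBasis κ ℝ E) (f : E → F) (x : E) :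
    Δ f x = ∑ i, fderiv ℝ (fderiv ℝ f) x (v i) (v i) := by
  simp [laplacian_eq_iteratedFDeriv_orthonormalBasis f v, iteratedFDeriv_two_apply]

theorem IsLocalMax.laplacian_nonpos {f : E → ℝ} {z : E} (hmax : IsLocalMax f z)
    (hf : ContDiffAt ℝ 2 f z) : Δ f z ≤ 0 := by
  rw [laplacian_eq_sum_fderiv_fderiv (stdOrthonormalBasis ℝ E)]
  exact Finset.sum_nonpos fun i _ => hmax.fderiv_fderiv_apply_self_nonpos hf _

theorem laplacian_norm_sq (x : E) : Δ (fun x : E => ‖x‖ ^ 2) x = 2 * Module.finrank ℝ E := by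
  set v := stdOrthonormalBasis ℝ E
  have hfderiv2 : fderiv ℝ (fderiv ℝ (fun x : E => ‖x‖ ^ 2)) x = 2 • innerSL ℝ := by
    rw [fderiv_norm_sq]
    exact (2 • innerSL ℝ : E →L[ℝ] E →L[ℝ] ℝ).fderiv
  have hv : ∀ i, innerSL ℝ (v i) (v i) = 1 := fun i => by
    rw [innerSL_apply_apply, real_inner_self_eq_norm_sq, v.orthonormal.1 i, one_pow]
  simp [laplacian_eq_sum_fderiv_fderiv v, hfderiv2, hv, mul_comm]

variable {Ω : Set E} {f : E → ℝ}

theorem exists_mem_frontier_isMaxOn_of_laplacian_pos (hΩo : IsOpen Ω)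
    (hΩb : Bornology.IsBounded Ω) (hne : Ω.Nonempty) (hf : ContDiffOn ℝ 2 f Ω)
    (hfc : ContinuousOn f (closure Ω)) (hΔ : ∀ x ∈ Ω, 0 < Δ f x) :
    ∃ z ∈ frontier Ω, IsMaxOn f (closure Ω) z := by
  obtain ⟨z, hz, hmax⟩ := hΩb.isCompact_closure.exists_isMaxOn hne.closure hfc
  refine ⟨z, ?_, hmax⟩
  rw [hΩo.frontier_eq]
  refine ⟨hz, fun hzΩ => ?_⟩
  have hloc : IsLocalMax f z := (hmax.on_subset subset_closure).isLocalMax (hΩo.mem_nhds hzΩ)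
  exact (hΔ z hzΩ).not_ge (hloc.laplacian_nonpos (hf.contDiffAt (hΩo.mem_nhds hzΩ)))

theorem le_zero_of_laplacian_nonneg [Nontrivial E] (hΩo : IsOpen Ω)
    (hΩb : Bornology.IsBounded Ω) (hf : ContDiffOn ℝ 2 f Ω) (hfc : ContinuousOn f (closure Ω))
    (hΔ : ∀ x ∈ Ω, 0 ≤ Δ f x) (hfr : ∀ x ∈ frontier Ω, f x ≤ 0) {x : E} (hx : x ∈ Ω) :
    f x ≤ 0 := by
  obtain ⟨R, hR⟩ := hΩb.closure.subset_closedBall 0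
  refine le_of_forall_pos_le_add fun ε hε => ?_
  -- `δ ‖y‖² ≤ ε` on `closure Ω`
  set δ := ε / (R ^ 2 + 1)
  have hδ : 0 < δ := by positivity
  have hq : ContDiff ℝ 2 (fun y : E => ‖y‖ ^ 2) := contDiff_norm_sq ℝ
  have hδq : ContDiff ℝ 2 (δ • fun y : E => ‖y‖ ^ 2) := hq.const_smul δ
  have hΔG : ∀ y ∈ Ω, 0 < Δ (f + δ • fun y : E => ‖y‖ ^ 2) y := fun y hy => by
    rw [(hf.contDiffAt (hΩo.mem_nhds hy)).laplacian_add hδq.contDiffAt,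
      laplacian_smul δ hq.contDiffAt, laplacian_norm_sq]
    exact add_pos_of_nonneg_of_pos (hΔ y hy)
      (smul_pos hδ (mul_pos two_pos (Nat.cast_pos.mpr Module.finrank_pos)))
  obtain ⟨z, hz, hmax⟩ := exists_mem_frontier_isMaxOn_of_laplacian_pos hΩo hΩb ⟨x, hx⟩
    (hf.add hδq.contDiffOn) (hfc.add hδq.continuous.continuousOn) hΔG
  have hzR : ‖z‖ ≤ R := by simpa using hR (frontier_subset_closure hz)
  calc f x ≤ f x + δ * ‖x‖ ^ 2 := le_add_of_nonneg_right (by positivity)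
    _ ≤ f z + δ * ‖z‖ ^ 2 := hmax (subset_closure hx)
    _ ≤ 0 + δ * R ^ 2 := by gcongr; exact hfr z hz
    _ ≤ 0 + ε := by
      gcongr
      rw [div_mul_eq_mul_div, div_le_iff₀ (by positivity)]
      nlinarith

theorem eqOn_zero_of_laplacian_eq_zero [Nontrivial E] (hΩo : IsOpen Ω)
    (hΩb : Bornology.IsBounded Ω) (hf : ContDiffOn ℝ 2 f Ω) (hfc : ContinuousOn f (closure Ω))
    (hΔ : ∀ x ∈ Ω, Δ f x = 0) (hfr : ∀ x ∈ frontier Ω, f x = 0) : Set.EqOn f 0 Ω := fun x hx =>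
  le_antisymm (le_zero_of_laplacian_nonneg hΩo hΩb hf hfc (fun y hy => (hΔ y hy).ge)
      (fun y hy => (hfr y hy).le) hx)
    (neg_nonpos.mp (le_zero_of_laplacian_nonneg (f := -f) hΩo hΩb hf.neg hfc.neg
      (fun y hy => by simp [laplacian_neg, hΔ y hy]) (fun y hy => by simp [hfr y hy]) hx))

end Laplacian

/-- `D D̄ (f m) = (Δ f) m`. -/
theorem sum_fderiv_smul_ι_mul_neg_ι_mul {n : ℕ} {f : EuclideanSpace ℝ (Fin n) → ℝ}
    {x : EuclideanSpace ℝ (Fin n)} (hf : ContDiffAt ℝ 2 f x) (m : CliffordAlgebra (Qneg n)) :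
    ∑ j, ∑ i, fderiv ℝ (fun y => fderiv ℝ f y (single i 1)) x (single j 1) •
        (ι (Qneg n) (single j 1) * -ι (Qneg n) (single i 1) * m) = Δ f x • m := by
  have hdf : DifferentiableAt ℝ (fderiv ℝ f) x :=
    (hf.fderiv_right (m := 1) le_rfl).differentiableAt one_ne_zero
  simp only [fderiv_fun_fderiv_apply hdf]
  rw [sum_smul_ι_single_mul_neg_ι_single_mul _ fun i j => hf.isSymmSndFDerivAt (by simp) _ _,
    laplacian_eq_sum_fderiv_fderiv (EuclideanSpace.basisFun (Fin n) ℝ)]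
  simp [EuclideanSpace.basisFun_apply]

theorem orlicz_decomposition_uniqueness_general (n : ℕ)
    (b : Module.Basis (Finset (Fin n)) ℝ (CliffordAlgebra (Qneg n)))
    (Ω : Set (EuclideanSpace ℝ (Fin n))) (hΩo : IsOpen Ω)
    (hΩb : Bornology.IsBounded Ω)
    (gc : Finset (Fin n) → EuclideanSpace ℝ (Fin n) → ℝ)
    (hgC2 : ∀ A, ContDiffOn ℝ 2 (gc A) Ω)
    (hgcont : ∀ A, ContinuousOn (gc A) (closure Ω))
    (hgtrace : ∀ A, ∀ x ∈ frontier Ω, gc A x = 0)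
    -- `f = D̄g` is left monogenic on `Ω`:
    -- `Df = Σ_j Σ_i Σ_A (∂_j ∂_i g_A) e_j ē_i e_A = 0`.
    (hmonogenic : ∀ x ∈ Ω,
      ∑ j : Fin n, ∑ i : Fin n, ∑ A : Finset (Fin n),
        (fderiv ℝ (fun y => fderiv ℝ (gc A) y (EuclideanSpace.single i 1)) x
            (EuclideanSpace.single j 1)) •
          (CliffordAlgebra.ι (Qneg n) (EuclideanSpace.single j 1) *
            (-(CliffordAlgebra.ι (Qneg n) (EuclideanSpace.single i 1))) * b A) = 0) :
    -- then `f = D̄g = 0` on `Ω`.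
    ∀ x ∈ Ω,
      ∑ i : Fin n, ∑ A : Finset (Fin n),
        (fderiv ℝ (gc A) x (EuclideanSpace.single i 1)) •
          ((-(CliffordAlgebra.ι (Qneg n) (EuclideanSpace.single i 1))) * b A) = 0 := by
  intro x hx
  rcases n with _ | n
  · simp
  have hharm : ∀ A, ∀ y ∈ Ω, Δ (gc A) y = 0 := by
    intro A y hy
    have hm := hmonogenic y hy
    rw [Finset.sum_congr rfl fun j _ => Finset.sum_comm, Finset.sum_comm] at hm
    simp only [sum_fderiv_smul_ι_mul_neg_ι_mul ((hgC2 _).contDiffAt (hΩo.mem_nhds hy))] at hm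
    exact Fintype.linearIndependent_iff.mp b.linearIndependent _ hm A
  have hzero : ∀ A, gc A =ᶠ[𝓝 x] 0 := fun A =>
    eventually_of_mem (hΩo.mem_nhds hx)
      (eqOn_zero_of_laplacian_eq_zero hΩo hΩb (hgC2 A) (hgcont A) (hharm A) (hgtrace A))
  simp [(hzero _).fderiv_eq]

/-- Uniqueness half of the Orlicz decomposition
`L^ψ(Ω,Cl_n) = A^ψ(Ω,Cl_n) ⊕ D̄(W₀^{1,ψ}(Ω,Cl_n))`: if `f = D̄g` with `g` of zero
boundary trace and `f` is left monogenic (`Df = D(D̄g) = 0` on `Ω`), then `f = 0` on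
`Ω`. Here `g = Σ_A g_A e_A`, `D̄ = Σ_i ē_i ∂_i` with `ē_i = -e_i`, and
`f = D̄g = Σ_i Σ_A (∂_i g_A)(-e_i)e_A`. -/
theorem orlicz_decomposition_uniqueness (n : ℕ)
    (b : Module.Basis (Finset (Fin n)) ℝ (CliffordAlgebra (Qneg n)))
    (hb : ∀ A : Finset (Fin n), b A = eA n A)
    (Ω : Set (EuclideanSpace ℝ (Fin n))) (hΩo : IsOpen Ω)
    (hΩb : Bornology.IsBounded Ω)
    (gc : Finset (Fin n) → EuclideanSpace ℝ (Fin n) → ℝ)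
    (hgC2 : ∀ A, ContDiffOn ℝ 2 (gc A) Ω)
    (hgcont : ∀ A, ContinuousOn (gc A) (closure Ω))
    (hgtrace : ∀ A, ∀ x ∈ frontier Ω, gc A x = 0)
    -- `f = D̄g` is left monogenic on `Ω`:
    -- `Df = Σ_j Σ_i Σ_A (∂_j ∂_i g_A) e_j ē_i e_A = 0`.
    (hmonogenic : ∀ x ∈ Ω,
      ∑ j : Fin n, ∑ i : Fin n, ∑ A : Finset (Fin n),
        (fderiv ℝ (fun y => fderiv ℝ (gc A) y (EuclideanSpace.single i 1)) x
            (EuclideanSpace.single j 1)) •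
          (CliffordAlgebra.ι (Qneg n) (EuclideanSpace.single j 1) *
            (-(CliffordAlgebra.ι (Qneg n) (EuclideanSpace.single i 1))) * b A) = 0) :
    -- then `f = D̄g = 0` on `Ω`.
    ∀ x ∈ Ω,
      ∑ i : Fin n, ∑ A : Finset (Fin n),
        (fderiv ℝ (gc A) x (EuclideanSpace.single i 1)) •
          ((-(CliffordAlgebra.ι (Qneg n) (EuclideanSpace.single i 1))) * b A) = 0 :=
  orlicz_decomposition_uniqueness_general n b Ω hΩo hΩb gc hgC2 hgcont hgtrace hmonogenic
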